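/- Let f₀, f₁ : [0, π/2] → ℝ be continuous and positive, and suppose the ratio f₁/f₀ is strictly monotone on [0, π/2]. Then the double integral ∫₀^{π/2} ∫₀^{π/2} (sin²y − sin²x)·(f₁(y)/f₀(y) − f₁(x)/f₀(x))·f₀(x)·f₀(y) dx dy is nonzero. -/
import Mathlib

open Real Set intervalIntegral MeasureTheory

lemma sin_sq_lt_aux {x y : ℝ} (hx : x ∈ Icc 0 (π / 2)) (hy : y ∈ Icc 0 (π / 2))
    (hxy : x < y) : sin x ^ 2 < sin y ^ 2 := by
  have h1 : sin x < sin y := by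
    apply Real.strictMonoOn_sin ⟨by linarith [hx.1, pi_pos], hx.2⟩
      ⟨by linarith [hy.1, pi_pos], hy.2⟩ hxy
  have h0 : 0 ≤ sin x := Real.sin_nonneg_of_nonneg_of_le_pi hx.1 (by linarith [hx.2, pi_pos])
  exact pow_lt_pow_left₀ h1 h0 (by norm_num)

lemma aux_pos (g h : ℝ → ℝ) (hg : ContinuousOn g (Icc 0 (π / 2)))
    (hh : ContinuousOn h (Icc 0 (π / 2))) (hhpos : ∀ ψ ∈ Icc 0 (π / 2), 0 < h ψ)
    (hmono : StrictMonoOn g (Icc 0 (π / 2))) :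
    0 < ∫ y in (0:ℝ)..(π / 2), ∫ x in (0:ℝ)..(π / 2),
      (sin y ^ 2 - sin x ^ 2) * (g y - g x) * h x * h y := by
  have hpi : (0:ℝ) < π / 2 := by positivity
  set F : ℝ × ℝ → ℝ := fun p => (sin p.1 ^ 2 - sin p.2 ^ 2) * (g p.1 - g p.2) * h p.2 * h p.1
    with hF
  have key : ∀ x ∈ Icc (0:ℝ) (π/2), ∀ y ∈ Icc (0:ℝ) (π/2), 0 ≤ F (y, x) := by
    intro x hx y hy
    have hhx := (hhpos x hx).le
    have hhy := (hhpos y hy).le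
    rcases lt_trichotomy x y with hlt | heq | hgt
    · have h1 := sin_sq_lt_aux hx hy hlt
      have h2 := hmono hx hy hlt
      have : 0 ≤ (sin y ^ 2 - sin x ^ 2) * (g y - g x) :=
        mul_nonneg (by linarith) (by linarith)
      exact mul_nonneg (mul_nonneg this hhx) hhy
    · simp [hF, heq]
    · have h1 := sin_sq_lt_aux hy hx hgt
      have h2 := hmono hy hx hgt
      have : 0 ≤ (sin y ^ 2 - sin x ^ 2) * (g y - g x) := by nlinarith
      exact mul_nonneg (mul_nonneg this hhx) hhy
  have keypos : ∀ x ∈ Icc (0:ℝ) (π/2), ∀ y ∈ Icc (0:ℝ) (π/2), x < y → 0 < F (y, x) := by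
    intro x hx y hy hlt
    have h1 := sin_sq_lt_aux hx hy hlt
    have h2 := hmono hx hy hlt
    have hhx := hhpos x hx
    have hhy := hhpos y hy
    have : 0 < (sin y ^ 2 - sin x ^ 2) * (g y - g x) :=
      mul_pos (by linarith) (by linarith)
    exact mul_pos (mul_pos this hhx) hhy
  have hFcont : ContinuousOn F (Icc (0:ℝ) (π/2) ×ˢ Icc (0:ℝ) (π/2)) := by
    have hg1 : ContinuousOn (fun p : ℝ × ℝ => g p.1) (Icc (0:ℝ) (π/2) ×ˢ Icc (0:ℝ) (π/2)) :=
      hg.comp continuousOn_fst (fun p hp => hp.1)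
    have hg2 : ContinuousOn (fun p : ℝ × ℝ => g p.2) (Icc (0:ℝ) (π/2) ×ˢ Icc (0:ℝ) (π/2)) :=
      hg.comp continuousOn_snd (fun p hp => hp.2)
    have hh1 : ContinuousOn (fun p : ℝ × ℝ => h p.1) (Icc (0:ℝ) (π/2) ×ˢ Icc (0:ℝ) (π/2)) :=
      hh.comp continuousOn_fst (fun p hp => hp.1)
    have hh2 : ContinuousOn (fun p : ℝ × ℝ => h p.2) (Icc (0:ℝ) (π/2) ×ˢ Icc (0:ℝ) (π/2)) :=
      hh.comp continuousOn_snd (fun p hp => hp.2)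
    have hs1 : Continuous (fun p : ℝ × ℝ => sin p.1 ^ 2) :=
      (Real.continuous_sin.comp continuous_fst).pow 2
    have hs2 : Continuous (fun p : ℝ × ℝ => sin p.2 ^ 2) :=
      (Real.continuous_sin.comp continuous_snd).pow 2
    exact (((hs1.continuousOn.sub hs2.continuousOn).mul (hg1.sub hg2)).mul hh2).mul hh1
  have hFint : IntegrableOn F (Icc (0:ℝ) (π/2) ×ˢ Icc (0:ℝ) (π/2)) :=
    hFcont.integrableOn_compact (isCompact_Icc.prod isCompact_Icc)
  have hFint' : IntegrableOn F (Ioc (0:ℝ) (π/2) ×ˢ Ioc (0:ℝ) (π/2))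
      ((volume : Measure ℝ).prod volume) :=
    hFint.mono_set (prod_mono Ioc_subset_Icc_self Ioc_subset_Icc_self)
  have step1 : (∫ y in (0:ℝ)..(π / 2), ∫ x in (0:ℝ)..(π / 2),
      (sin y ^ 2 - sin x ^ 2) * (g y - g x) * h x * h y)
      = ∫ p in Ioc (0:ℝ) (π/2) ×ˢ Ioc (0:ℝ) (π/2), F p ∂((volume : Measure ℝ).prod volume) := by
    rw [MeasureTheory.setIntegral_prod F hFint']
    rw [intervalIntegral.integral_of_le hpi.le]
    exact setIntegral_congr_fun measurableSet_Ioc (fun y _ => by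
      rw [intervalIntegral.integral_of_le hpi.le])
  rw [step1]
  rw [setIntegral_pos_iff_support_of_nonneg_ae ?_ hFint']
  · -- measure of support positive
    have hsub : Ioo (π/3) (π/2) ×ˢ Ioo (0:ℝ) (π/6) ⊆
        Function.support F ∩ (Ioc (0:ℝ) (π/2) ×ˢ Ioc (0:ℝ) (π/2)) := by
      rintro ⟨y, x⟩ ⟨hy, hx⟩
      have hy' : y ∈ Icc (0:ℝ) (π/2) := ⟨by linarith [hy.1, pi_pos], hy.2.le⟩
      have hx' : x ∈ Icc (0:ℝ) (π/2) := ⟨hx.1.le, by linarith [hx.2, pi_pos]⟩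
      have hxy : x < y := by linarith [hx.2, hy.1, pi_pos]
      refine ⟨(keypos x hx' y hy' hxy).ne', ⟨by linarith [hy.1, pi_pos], hy.2.le⟩,
        hx.1, by linarith [hx.2, pi_pos]⟩
    refine lt_of_lt_of_le ?_ (measure_mono hsub)
    rw [Measure.prod_prod]
    simp only [Real.volume_Ioo]
    have h1 : (0:ℝ) < π / 2 - π / 3 := by linarith [pi_pos]
    have h2 : (0:ℝ) < π / 6 - 0 := by linarith [pi_pos]
    exact ENNReal.mul_pos (ENNReal.ofReal_pos.2 h1).ne' (ENNReal.ofReal_pos.2 h2).ne'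
  · -- a.e. nonneg
    refine (ae_restrict_iff' (measurableSet_Ioc.prod measurableSet_Ioc)).2 (ae_of_all _ ?_)
    rintro ⟨y, x⟩ ⟨hy, hx⟩
    exact key x ⟨hx.1.le, hx.2⟩ y ⟨hy.1.le, hy.2⟩

theorem stmt_2 (f₀ f₁ : ℝ → ℝ)
    (hc₀ : ContinuousOn f₀ (Icc 0 (π / 2))) (hc₁ : ContinuousOn f₁ (Icc 0 (π / 2)))
    (hp₀ : ∀ ψ ∈ Icc 0 (π / 2), 0 < f₀ ψ) (hp₁ : ∀ ψ ∈ Icc 0 (π / 2), 0 < f₁ ψ)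
    (hmono : StrictMonoOn (fun ψ => f₁ ψ / f₀ ψ) (Icc 0 (π / 2)) ∨
             StrictAntiOn (fun ψ => f₁ ψ / f₀ ψ) (Icc 0 (π / 2))) :
    (∫ y in (0:ℝ)..(π / 2), ∫ x in (0:ℝ)..(π / 2),
      (sin y ^ 2 - sin x ^ 2) * (f₁ y / f₀ y - f₁ x / f₀ x) * f₀ x * f₀ y) ≠ 0 := by
  have hgc : ContinuousOn (fun ψ => f₁ ψ / f₀ ψ) (Icc 0 (π / 2)) :=
    hc₁.div hc₀ (fun ψ hψ => (hp₀ ψ hψ).ne')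
  rcases hmono with hm | hm
  · exact (aux_pos _ f₀ hgc hc₀ hp₀ hm).ne'
  · have hm' : StrictMonoOn (fun ψ => -(f₁ ψ / f₀ ψ)) (Icc 0 (π / 2)) :=
      fun a ha b hb hab => neg_lt_neg (hm ha hb hab)
    have hpos : 0 < ∫ y in (0:ℝ)..(π / 2), ∫ x in (0:ℝ)..(π / 2),
        (sin y ^ 2 - sin x ^ 2) * (-(f₁ y / f₀ y) - -(f₁ x / f₀ x)) * f₀ x * f₀ y :=
      aux_pos (fun ψ => -(f₁ ψ / f₀ ψ)) f₀ hgc.neg hc₀ hp₀ hm'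
    have heq : (∫ y in (0:ℝ)..(π / 2), ∫ x in (0:ℝ)..(π / 2),
        (sin y ^ 2 - sin x ^ 2) * (f₁ y / f₀ y - f₁ x / f₀ x) * f₀ x * f₀ y)
        = -(∫ y in (0:ℝ)..(π / 2), ∫ x in (0:ℝ)..(π / 2),
        (sin y ^ 2 - sin x ^ 2) * (-(f₁ y / f₀ y) - -(f₁ x / f₀ x)) * f₀ x * f₀ y) := by
      rw [← intervalIntegral.integral_neg]
      apply intervalIntegral.integral_congr
      intro y _
      beta_reduce
      rw [← intervalIntegral.integral_neg]
      apply intervalIntegral.integral_congr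
      intro x _
      beta_reduce
      ring
    rw [heq]
    exact neg_ne_zero.mpr hpos.ne'
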